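/- arXiv:2310.05043 — 2 statements merged into one kernel-verified Lean document; each statement's English description precedes it below -/
import Mathlib

section
/- Let κ and λ be infinite regular cardinals with λ ≤ κ, and let η : K → κ^λ be a uniform embedding of a λ-ultrametric space K such that η[K] has weight at most κ and is uniformly nowhere dense in κ^λ. Then for all discrete sets X and Y with |X| ≤ |κ^{δ₀}| and |Y| ≤ |κ^{δ₁}| for some δ₀ ≤ δ₁ < λ, every surjection f : Y → X, every uniformly continuous map b : K → Y, and every uniformly continuous surjection g : κ^λ → X satisfying g ∘ η = f ∘ b, there exists a uniformly continuous surjection h : κ^λ → Y such that f ∘ h = g and h ∘ η = b. -/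
/-!
Uniform continuity into a discrete space means being constant on all balls of some fixed
radius. Choose `β < λ` beyond the moduli of `g` and of `b ∘ η⁻¹` and beyond a level at which
`η[K]` is uniformly nowhere dense. Then every fibre of `g` contains a `β`-ball missing the
`β`-neighbourhood of `η[K]`, and since `|Y| ≤ κ^|δ₁|` the coordinates in `[β, β + δ₁)` of the
points of that ball can encode any `y ∈ f⁻¹(x)`; this yields `(β + δ₁)`-separated points `p y`
with `g (p y) = f y`. Let `h` be `b` near `η[K]`, `y` near `p y` and a lift of `g` along `f`
elsewhere: in an ultrametric space these regions are unions of balls, so `h` is constant on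
`(β + δ₁)`-balls.
-/

open Set Function

universe u v

/-- The closed ball of radius `α` and center `x` in an ordinal-valued ultrametric space:
`B_α(x) = {y | u x y ≥ α}`. -/
def Ball {X : Type u} (u : X → X → Ordinal) (α : Ordinal) (x : X) : Set X :=
  {y | α ≤ u x y}

/-- `u` is a `γ`-ultrametric on `X`: it takes values in `γ + 1` (i.e. values `≤ γ`),
`u x y = γ` iff `x = y`, the ultrametric triangle law, and symmetry. -/
structure IsUltrametric {X : Type u} (γ : Ordinal) (u : X → X → Ordinal) : Prop where
  le_gamma : ∀ x y, u x y ≤ γ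
  eq_gamma_iff : ∀ x y, u x y = γ ↔ x = y
  triangle : ∀ x y z, min (u y x) (u x z) ≤ u y z
  symm : ∀ x y, u x y = u y x

/-- The topology induced by a `γ`-ultrametric: the closed balls `B_α(x)`, `α < γ`,
form a base. -/
def ballTopology {X : Type u} (γ : Ordinal) (u : X → X → Ordinal) : TopologicalSpace X :=
  TopologicalSpace.generateFrom {s : Set X | ∃ x α, α < γ ∧ s = Ball u α x}

/-- `f` is uniformly continuous from the `γX`-ultrametric space `(X, u)` to the
`γY`-ultrametric space `(Y, d)`. -/
def UnifCont {X : Type u} {Y : Type v} (γX γY : Ordinal)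
    (u : X → X → Ordinal) (d : Y → Y → Ordinal) (f : X → Y) : Prop :=
  ∀ ε < γY, ∃ δ < γX, ∀ a b, δ ≤ u a b → ε ≤ d (f a) (f b)

/-- A discrete set regarded as a `γ`-ultrametric space. -/
noncomputable def discreteUltra {X : Type u} (γ : Ordinal) (a b : X) : Ordinal :=
  @ite _ (a = b) (Classical.propDecidable _) γ 0

/-- `A` is uniformly nowhere dense in the `γ`-ultrametric space `(X, u)`. -/
def UnifNwd {X : Type u} (γ : Ordinal) (u : X → X → Ordinal) (A : Set X) : Prop :=
  ∀ α < γ, ∃ β, α < β ∧ β < γ ∧ ∀ b : X, ∃ a ∈ Ball u α b, Ball u β a ∩ A = ∅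

/-- The space `κ^λ` of functions from (the ordinals below) `λ` to (the ordinals below) `κ`. -/
def funSpace (κ lam : Cardinal.{0}) : Type 1 :=
  ↥(Set.Iio lam.ord) → ↥(Set.Iio κ.ord)

/-- The canonical `λ`-ultrametric on `κ^λ`: `u(a,b) = sup {α < λ : a↾α = b↾α}`. -/
noncomputable def funUltra (κ lam : Cardinal.{0}) (a b : funSpace κ lam) : Ordinal :=
  sSup {α : Ordinal | α < lam.ord ∧ ∀ β : ↥(Set.Iio lam.ord), (β : Ordinal) < α → a β = b β}

noncomputable instance (κ lam : Cardinal.{0}) : TopologicalSpace (funSpace κ lam) :=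
  ballTopology lam.ord (funUltra κ lam)

/-- The space `X` with topology `t` has weight (least cardinality of a base) at most `c`. -/
def WeightLE (X : Type u) (t : TopologicalSpace X) (c : Cardinal.{0}) : Prop :=
  ∃ B : Set (Set X), t.IsTopologicalBasis B ∧ Cardinal.mk B ≤ Cardinal.lift.{u} c

def ConstOnBalls {Z Y : Type*} (d : Z → Z → Ordinal) (β : Ordinal) (f : Z → Y) : Prop :=
  ∀ z w, β ≤ d z w → f z = f w

section Discrete

variable {Z Y : Type*} {d : Z → Z → Ordinal} {f : Z → Y}

theorem ConstOnBalls.mono {β β' : Ordinal} (hf : ConstOnBalls d β f) (hββ' : β ≤ β') :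
    ConstOnBalls d β' f :=
  fun z w hzw => hf z w (hββ'.trans hzw)

theorem unifCont_discreteUltra_iff {γZ γY : Ordinal} (h1 : 1 < γY) :
    UnifCont γZ γY d (discreteUltra γY) f ↔ ∃ δ < γZ, ConstOnBalls d δ f := by
  constructor
  · intro hf
    obtain ⟨δ, hδ, hf⟩ := hf 1 h1
    refine ⟨δ, hδ, fun z w hzw => by_contra fun hne => ?_⟩
    simpa [discreteUltra, hne] using hf z w hzw
  · rintro ⟨δ, hδ, hf⟩ ε hε
    exact ⟨δ, hδ, fun z w hzw => by simp [discreteUltra, hf z w hzw, hε.le]⟩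

end Discrete

namespace IsUltrametric

variable {X : Type*} {γ α : Ordinal} {u : X → X → Ordinal} (hu : IsUltrametric γ u)
include hu

theorem self_eq (x : X) : u x x = γ := (hu.eq_gamma_iff x x).2 rfl

theorem le_trans {x y z : X} (hxy : α ≤ u x y) (hyz : α ≤ u y z) : α ≤ u x z :=
  (le_min hxy hyz).trans (hu.triangle y x z)

theorem le_comm {x y : X} : α ≤ u x y ↔ α ≤ u y x := by rw [hu.symm]

theorem le_iff_left {x y z : X} (hxy : α ≤ u x y) : α ≤ u x z ↔ α ≤ u y z :=
  ⟨hu.le_trans (hu.le_comm.1 hxy), hu.le_trans hxy⟩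

theorem le_iff_right {x y z : X} (hxy : α ≤ u x y) : α ≤ u z x ↔ α ≤ u z y := by
  rw [hu.le_comm, hu.le_iff_left hxy, hu.le_comm]

end IsUltrametric

section Glue

variable {Z K Y X : Type*} {γ β β' : Ordinal} {d : Z → Z → Ordinal}
  {η : K → Z} {b : K → Y} {p : Y → Z} {s : Z → Y}

noncomputable def glue (d : Z → Z → Ordinal) (β β' : Ordinal) (η : K → Z) (b : K → Y)
    (p : Y → Z) (s : Z → Y) (z : Z) : Y :=
  open Classical in
  if hz : ∃ k, β ≤ d z (η k) then b hz.choose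
  else if hz' : ∃ y, β' ≤ d (p y) z then hz'.choose
  else s z

variable (hd : IsUltrametric γ d)
include hd

theorem glue_comp (hβ : β ≤ γ) (hb : ConstOnBalls (fun k k' => d (η k) (η k')) β b) :
    glue d β β' η b p s ∘ η = b := by
  funext k
  have hk : ∃ k', β ≤ d (η k) (η k') := ⟨k, hd.self_eq _ ▸ hβ⟩
  simp only [comp_apply, glue, dif_pos hk]
  exact hb _ _ (hd.le_comm.1 hk.choose_spec)

theorem glue_apply_of_sep (hβ' : β' ≤ γ) (hfar : ∀ y k, ¬ β ≤ d (p y) (η k))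
    (hp : ∀ y y', β' ≤ d (p y) (p y') → y = y') (y : Y) :
    glue d β β' η b p s (p y) = y := by
  have hy : ∃ y', β' ≤ d (p y') (p y) := ⟨y, hd.self_eq _ ▸ hβ'⟩
  have hy' : ¬ ∃ k, β ≤ d (p y) (η k) := fun ⟨k, hk⟩ => hfar y k hk
  simp only [glue, dif_neg hy', dif_pos hy]
  exact hp _ _ hy.choose_spec

theorem comp_glue {f : Y → X} {g : Z → X} (hββ' : β ≤ β') (hg : ConstOnBalls d β g)
    (hcomm : g ∘ η = f ∘ b) (hgp : ∀ y, g (p y) = f y) (hs : f ∘ s = g) :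
    f ∘ glue d β β' η b p s = g := by
  funext z
  simp only [comp_apply, glue]
  split_ifs with hz hz'
  · rw [← comp_apply (f := f), ← hcomm]
    exact hg _ _ (hd.le_comm.1 hz.choose_spec)
  · rw [← hgp]
    exact hg _ _ (hββ'.trans hz'.choose_spec)
  · exact congrFun hs z

theorem constOnBalls_glue (hββ' : β ≤ β') (hb : ConstOnBalls (fun k k' => d (η k) (η k')) β b)
    (hp : ∀ y y', β' ≤ d (p y) (p y') → y = y') (hs : ConstOnBalls d β' s) :
    ConstOnBalls d β' (glue d β β' η b p s) := by
  intro z w hzw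
  have near_iff : (∃ k, β ≤ d z (η k)) ↔ ∃ k, β ≤ d w (η k) :=
    exists_congr fun k => hd.le_iff_left (hββ'.trans hzw)
  have marked_iff : (∃ y, β' ≤ d (p y) z) ↔ ∃ y, β' ≤ d (p y) w :=
    exists_congr fun y => hd.le_iff_right hzw
  unfold glue
  by_cases hz : ∃ k, β ≤ d z (η k)
  · have hw := near_iff.1 hz
    rw [dif_pos hz, dif_pos hw]
    refine hb _ _ (hd.le_trans (hd.le_comm.1 hz.choose_spec) ?_)
    exact (hd.le_iff_left (hββ'.trans hzw)).2 hw.choose_spec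
  rw [dif_neg hz, dif_neg (mt near_iff.2 hz)]
  by_cases hz' : ∃ y, β' ≤ d (p y) z
  · have hw' := marked_iff.1 hz'
    rw [dif_pos hz', dif_pos hw']
    refine hp _ _ (hd.le_trans hz'.choose_spec (hd.le_comm.1 ?_))
    exact (hd.le_iff_right hzw).2 hw'.choose_spec
  rw [dif_neg hz', dif_neg (mt marked_iff.2 hz')]
  exact hs z w hzw

theorem exists_extension {f : Y → X} {g : Z → X} (hβ' : β' ≤ γ) (hββ' : β ≤ β')
    (hf : Surjective f) (hg : ConstOnBalls d β g)
    (hb : ConstOnBalls (fun k k' => d (η k) (η k')) β b) (hcomm : g ∘ η = f ∘ b)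
    (hgp : ∀ y, g (p y) = f y) (hfar : ∀ y k, ¬ β ≤ d (p y) (η k))
    (hp : ∀ y y', β' ≤ d (p y) (p y') → y = y') :
    ∃ h : Z → Y, Surjective h ∧ ConstOnBalls d β' h ∧ f ∘ h = g ∧ h ∘ η = b := by
  have hs : ConstOnBalls d β' (surjInv hf ∘ g) := fun z w hzw =>
    congrArg (surjInv hf) (hg.mono hββ' z w hzw)
  refine ⟨glue d β β' η b p (surjInv hf ∘ g), fun y => ⟨p y, glue_apply_of_sep hd hβ' hfar hp y⟩,
    constOnBalls_glue hd hββ' hb hp hs, comp_glue hd hββ' hg hcomm hgp ?_,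
    glue_comp hd (hββ'.trans hβ') hb⟩
  exact funext fun z => surjInv_eq hf (g z)

end Glue

section FunSpace

variable {κ lam : Cardinal.{0}} {a a' c : funSpace κ lam}

theorem funUltra_le_ord : funUltra κ lam a c ≤ lam.ord :=
  csSup_le' fun _ hα => hα.1.le

theorem apply_eq_of_lt_funUltra {β : Iio lam.ord} (hβ : (β : Ordinal) < funUltra κ lam a c) :
    a β = c β := by
  obtain ⟨α, hα, hβα⟩ := (lt_csSup_iff' ⟨lam.ord, fun _ hα => hα.1.le⟩).1 hβ
  exact hα.2 β hβα

theorem le_funUltra (hlim : Order.IsSuccLimit lam.ord) {α : Ordinal} (hα : α ≤ lam.ord)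
    (h : ∀ β : Iio lam.ord, (β : Ordinal) < α → a β = c β) : α ≤ funUltra κ lam a c := by
  have hbdd : BddAbove {α | α < lam.ord ∧ ∀ β : Iio lam.ord, (β : Ordinal) < α → a β = c β} :=
    ⟨lam.ord, fun _ hα => hα.1.le⟩
  rcases hα.lt_or_eq with hα | rfl
  · exact le_csSup hbdd ⟨hα, h⟩
  exact le_of_forall_lt fun ξ hξ =>
    (Order.lt_succ ξ).trans_le (le_csSup hbdd ⟨hlim.succ_lt hξ, fun β _ => h β β.2⟩)

theorem funUltra_isUltrametric (hlim : Order.IsSuccLimit lam.ord) :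
    IsUltrametric lam.ord (funUltra κ lam) where
  le_gamma _ _ := funUltra_le_ord
  eq_gamma_iff a c := by
    refine ⟨fun h => funext fun β => apply_eq_of_lt_funUltra (h.symm ▸ β.2 : (β : Ordinal) < _), ?_⟩
    rintro rfl
    exact funUltra_le_ord.antisymm (le_funUltra hlim le_rfl fun _ _ => rfl)
  triangle a' a c := le_funUltra hlim ((min_le_left _ _).trans funUltra_le_ord) fun β hβ =>
    (apply_eq_of_lt_funUltra (hβ.trans_le (min_le_left _ _))).trans
      (apply_eq_of_lt_funUltra (hβ.trans_le (min_le_right _ _)))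
  symm a c := by
    simp only [funUltra, eq_comm (a := a _)]

noncomputable def splice {δ : Ordinal} (a : funSpace κ lam) (β : Ordinal) (c : Iio δ → Iio κ.ord) :
    funSpace κ lam :=
  fun γ => if h : β ≤ γ ∧ (γ : Ordinal) - β < δ then c ⟨_, h.2⟩ else a γ

variable {β δ : Ordinal} {e e' : Iio δ → Iio κ.ord}

theorem splice_of_lt {γ : Iio lam.ord} (hγ : (γ : Ordinal) < β) : splice a β e γ = a γ :=
  dif_neg fun h => (h.1.trans_lt hγ).false

theorem splice_add (i : Iio δ) (h : β + i < lam.ord) : splice a β e ⟨β + i, h⟩ = e i := by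
  simp only [splice, Ordinal.add_sub_cancel]
  exact dif_pos ⟨le_self_add, i.2⟩

theorem le_funUltra_splice (hlim : Order.IsSuccLimit lam.ord) (hβ : β ≤ lam.ord) :
    β ≤ funUltra κ lam a (splice a β e) :=
  le_funUltra hlim hβ fun _ hγ => (splice_of_lt hγ).symm

theorem eq_of_add_le_funUltra_splice (h : β + δ ≤ funUltra κ lam (splice a β e) (splice a' β e')) :
    e = e' := by
  funext i
  have hi : β + i < β + δ := (add_lt_add_iff_left β).2 i.2
  have := apply_eq_of_lt_funUltra (β := ⟨β + i, (hi.trans_le h).trans_le funUltra_le_ord⟩)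
    (hi.trans_le h)
  rwa [splice_add, splice_add] at this

theorem exists_separated_near {Y : Type*} (hlim : Order.IsSuccLimit lam.ord)
    (hβδ : β + δ ≤ lam.ord) (e : Y ↪ (Iio δ → Iio κ.ord)) (a : Y → funSpace κ lam) :
    ∃ p : Y → funSpace κ lam, (∀ y, β ≤ funUltra κ lam (a y) (p y)) ∧
      ∀ y y', β + δ ≤ funUltra κ lam (p y) (p y') → y = y' :=
  ⟨fun y => splice (a y) β (e y), fun _ => le_funUltra_splice hlim (le_self_add.trans hβδ),
    fun _ _ h => e.injective (eq_of_add_le_funUltra_splice h)⟩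

end FunSpace

theorem nonempty_embedding_of_mk_le_power {Y : Type*} {κ : Cardinal.{0}} {δ : Ordinal.{0}}
    (hY : Cardinal.mk Y ≤ Cardinal.lift (κ ^ δ.card)) :
    Nonempty (Y ↪ (Iio δ → Iio κ.ord)) := by
  rw [← Cardinal.lift_mk_le', ← Cardinal.power_def, Cardinal.mk_Iio_ordinal,
    Cardinal.mk_Iio_ordinal, Cardinal.card_ord, ← Cardinal.lift_power, Cardinal.lift_lift]
  simpa using Cardinal.lift_le.2 hY

theorem stmt12_general (κ lam : Cardinal.{0}) (hlam : lam.IsRegular)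
    (K : Type u) (uK : K → K → Ordinal)
    -- `η : K → κ^λ` is a uniform embedding
    (η : K → funSpace κ lam)
    (hηinv : ∀ ε < lam.ord, ∃ δ < lam.ord, ∀ a b : K,
      δ ≤ funUltra κ lam (η a) (η b) → ε ≤ uK a b)
    -- whose image has weight at most `κ` and is uniformly nowhere dense in `κ^λ`
    (hnwd : UnifNwd lam.ord (funUltra κ lam) (Set.range η))
    -- discrete sets `X`, `Y` with `|X| ≤ |κ^{δ₀}|`, `|Y| ≤ |κ^{δ₁}|`, `δ₀ ≤ δ₁ < λ`
    (X Y : Type v) (δ₁ : Ordinal) (hδ₁ : δ₁ < lam.ord)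
    (hY : Cardinal.mk Y ≤ Cardinal.lift.{v} (κ ^ δ₁.card))
    (f : Y → X) (hf : Surjective f)
    (b : K → Y) (hb : UnifCont lam.ord lam.ord uK (discreteUltra lam.ord) b)
    (g : funSpace κ lam → X) (hgs : Surjective g)
    (hg : UnifCont lam.ord lam.ord (funUltra κ lam) (discreteUltra lam.ord) g)
    (hcomm : g ∘ η = f ∘ b) :
    ∃ h : funSpace κ lam → Y, Surjective h ∧
      UnifCont lam.ord lam.ord (funUltra κ lam) (discreteUltra lam.ord) h ∧
      f ∘ h = g ∧ h ∘ η = b := by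
  have hlim : Order.IsSuccLimit lam.ord := Cardinal.isSuccLimit_ord hlam.aleph0_le
  have hU := funUltra_isUltrametric (κ := κ) hlim
  have h1 : 1 < lam.ord := Ordinal.one_lt_of_isSuccLimit hlim
  obtain ⟨δg, hδg, hgc⟩ := (unifCont_discreteUltra_iff h1).1 hg
  obtain ⟨δb, hδb, hbc⟩ := (unifCont_discreteUltra_iff h1).1 hb
  obtain ⟨δη, hδη, hηb⟩ := hηinv δb hδb
  obtain ⟨β, hβmax, hβ, hnb⟩ := hnwd (max δg δη) (max_lt hδg hδη)
  have hgβ : ConstOnBalls (funUltra κ lam) β g := hgc.mono ((le_max_left _ _).trans hβmax.le)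
  have hbβ : ConstOnBalls (fun k k' => funUltra κ lam (η k) (η k')) β b := fun k k' hkk' =>
    hbc k k' (hηb k k' (((le_max_right _ _).trans hβmax.le).trans hkk'))
  have hfar : ∀ x, ∃ a, g a = x ∧ ∀ k, ¬ β ≤ funUltra κ lam a (η k) := by
    intro x
    obtain ⟨z, rfl⟩ := hgs x
    obtain ⟨a, hza, hdisj⟩ := hnb z
    exact ⟨a, (hgc z a ((le_max_left _ _).trans hza)).symm,
      fun k hk => Set.eq_empty_iff_forall_notMem.1 hdisj (η k) ⟨hk, k, rfl⟩⟩
  choose A hgA hAfar using hfar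
  obtain ⟨e⟩ := nonempty_embedding_of_mk_le_power hY
  have hβδ : β + δ₁ < lam.ord := Ordinal.isPrincipal_add_ord hlam.aleph0_le hβ hδ₁
  obtain ⟨p, hAp, hp⟩ := exists_separated_near hlim hβδ.le e (A ∘ f)
  obtain ⟨h, hsurj, hconst, hfh, hhη⟩ := exists_extension hU hβδ.le le_self_add hf hgβ hbβ hcomm
    (fun y => (hgβ _ _ (hAp y)).symm.trans (hgA _))
    (fun y k hk => hAfar (f y) k (hU.le_trans (hAp y) hk)) hp
  exact ⟨h, hsurj, (unifCont_discreteUltra_iff h1).2 ⟨_, hβδ, hconst⟩, hfh, hhη⟩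

theorem stmt12 (κ lam : Cardinal.{0}) (hκ : κ.IsRegular) (hlam : lam.IsRegular)
    (hle : lam ≤ κ)
    (K : Type u) (uK : K → K → Ordinal) (hu : IsUltrametric lam.ord uK)
    -- `η : K → κ^λ` is a uniform embedding
    (η : K → funSpace κ lam) (hinj : Injective η)
    (hηu : UnifCont lam.ord lam.ord uK (funUltra κ lam) η)
    (hηinv : ∀ ε < lam.ord, ∃ δ < lam.ord, ∀ a b : K,
      δ ≤ funUltra κ lam (η a) (η b) → ε ≤ uK a b)
    -- whose image has weight at most `κ` and is uniformly nowhere dense in `κ^λ`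
    (hwr : WeightLE ↥(Set.range η) instTopologicalSpaceSubtype κ)
    (hnwd : UnifNwd lam.ord (funUltra κ lam) (Set.range η))
    -- discrete sets `X`, `Y` with `|X| ≤ |κ^{δ₀}|`, `|Y| ≤ |κ^{δ₁}|`, `δ₀ ≤ δ₁ < λ`
    (X Y : Type v) (δ₀ δ₁ : Ordinal) (hδ : δ₀ ≤ δ₁) (hδ₁ : δ₁ < lam.ord)
    (hX : Cardinal.mk X ≤ Cardinal.lift.{v} (κ ^ δ₀.card))
    (hY : Cardinal.mk Y ≤ Cardinal.lift.{v} (κ ^ δ₁.card))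
    (f : Y → X) (hf : Surjective f)
    (b : K → Y) (hb : UnifCont lam.ord lam.ord uK (discreteUltra lam.ord) b)
    (g : funSpace κ lam → X) (hgs : Surjective g)
    (hg : UnifCont lam.ord lam.ord (funUltra κ lam) (discreteUltra lam.ord) g)
    (hcomm : g ∘ η = f ∘ b) :
    ∃ h : funSpace κ lam → Y, Surjective h ∧
      UnifCont lam.ord lam.ord (funUltra κ lam) (discreteUltra lam.ord) h ∧
      f ∘ h = g ∧ h ∘ η = b :=
  stmt12_general κ lam hlam K uK η hηinv hnwd X Y δ₁ hδ₁ hY f hf b hb g hgs hg hcomm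
end

section
/- Let κ be a weakly compact cardinal and endow 2^κ (the set of functions from κ to {0,1}) with the topology induced by the κ-ultrametric u(a,b) = sup{α < κ : a↾α = b↾α}. Then every nowhere dense subset of 2^κ is uniformly nowhere dense. -/
open Set Function

universe u v

/-- The generalized Cantor space `2^κ` of functions from (the ordinals below) `κ` to `{0,1}`. -/
def cantor (κ : Cardinal.{0}) : Type 1 := ↥(Set.Iio κ.ord) → Bool

/-- The canonical `κ`-ultrametric on `2^κ`: `u(a,b) = sup {α < κ : a↾α = b↾α}`. -/
noncomputable def cantorUltra (κ : Cardinal.{0}) (a b : cantor κ) : Ordinal :=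
  sSup {α : Ordinal | α < κ.ord ∧ ∀ β : ↥(Set.Iio κ.ord), (β : Ordinal) < α → a β = b β}

noncomputable instance (κ : Cardinal.{0}) : TopologicalSpace (cantor κ) :=
  ballTopology κ.ord (cantorUltra κ)

/-- `κ` is weakly compact: it is uncountable and has the Ramsey property `κ → (κ)²`. -/
def WeaklyCompact (κ : Cardinal.{0}) : Prop :=
  Cardinal.aleph0 < κ ∧
  ∀ f : ↥(Set.Iio κ.ord) → ↥(Set.Iio κ.ord) → Bool,
    ∃ (i : Bool) (A : Set ↥(Set.Iio κ.ord)), Cardinal.mk A = Cardinal.lift.{1} κ ∧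
      ∀ a ∈ A, ∀ b ∈ A, a < b → f a b = i

/-- A space is `κ`-compact if every open cover has a subcover of size `< κ`. -/
def KappaCompact (X : Type u) (t : TopologicalSpace X) (κ : Cardinal.{0}) : Prop :=
  ∀ C : Set (Set X), (∀ s ∈ C, t.IsOpen s) → ⋃₀ C = Set.univ →
    ∃ D ⊆ C, Cardinal.mk D < Cardinal.lift.{u} κ ∧ ⋃₀ D = Set.univ

/-!
Weak compactness makes `κ` inaccessible. Regularity: colour a pair of ordinals below `κ` by
whether they lie below the same point of a short cofinal set. Strong limit (Sierpiński): a
homogeneous set for the lexicographic comparison of an injection `κ → 2^λ` may be taken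
lexicographically increasing (flip all bits otherwise); sending each of its points to the
place where it first differs from the next point, together with its values before that place,
is injective, so `κ` is at most `∑_{d < λ} 2^|d|`, which is `< κ` by induction on `λ`.

Then for `α < κ` the fewer than `κ` extensions by `false` of the functions on `α` meet every
ball of radius `α`. Inside the ball around each of them pick a smaller ball `B_{β_s}(a_s)`
missing `A`; by regularity `β = sup β_s < κ` works for all balls at once.
-/

open Cardinal Ordinal Order

universe w

section Ultrametric

variable {X : Type u} {γ α β : Ordinal.{v}} {u : X → X → Ordinal.{v}}

theorem ball_subset_ball_of_le (h : α ≤ β) (x : X) : Ball u β x ⊆ Ball u α x :=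
  fun _ hy => h.trans hy

namespace IsUltrametric

theorem mem_ball_self (hu : IsUltrametric γ u) (hα : α ≤ γ) (x : X) : x ∈ Ball u α x := by
  simpa [Ball, (hu.eq_gamma_iff x x).2 rfl] using hα

theorem mem_ball_trans (hu : IsUltrametric γ u) {x y z : X} (hy : y ∈ Ball u α x)
    (hz : z ∈ Ball u α y) : z ∈ Ball u α x :=
  (le_min hy hz).trans (hu.triangle y x z)

theorem ball_subset_of_mem (hu : IsUltrametric γ u) {x y : X} (hy : y ∈ Ball u α x) :
    Ball u α y ⊆ Ball u α x :=
  fun _ hz => hu.mem_ball_trans hy hz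

theorem isTopologicalBasis (hu : IsUltrametric γ u) (hγ : 0 < γ) :
    @TopologicalSpace.IsTopologicalBasis X (ballTopology γ u)
      {s | ∃ x α, α < γ ∧ s = Ball u α x} := by
  let := ballTopology γ u
  refine ⟨?_, ?_, rfl⟩
  · rintro _ ⟨x, α, hα, rfl⟩ _ ⟨y, β, hβ, rfl⟩ z ⟨hzx, hzy⟩
    refine ⟨Ball u (max α β) z, ⟨z, max α β, max_lt hα hβ, rfl⟩,
      hu.mem_ball_self (max_lt hα hβ).le z, fun w hw => ⟨?_, ?_⟩⟩
    · exact hu.ball_subset_of_mem hzx (ball_subset_ball_of_le (le_max_left α β) z hw)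
    · exact hu.ball_subset_of_mem hzy (ball_subset_ball_of_le (le_max_right α β) z hw)
  · exact Set.eq_univ_of_forall fun x =>
      ⟨Ball u 0 x, ⟨x, 0, hγ, rfl⟩, hu.mem_ball_self hγ.le x⟩

theorem exists_ball_disjoint_of_isNowhereDense (hu : IsUltrametric γ u) {A : Set X}
    (hA : @IsNowhereDense X (ballTopology γ u) A) (hα : α < γ) (x : X) :
    ∃ a ∈ Ball u α x, ∃ β < γ, Ball u β a ∩ A = ∅ := by
  let := ballTopology γ u
  have hbasis := hu.isTopologicalBasis (zero_le.trans_lt hα)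
  obtain ⟨a, hax, ha⟩ : ∃ a ∈ Ball u α x, a ∉ closure A := by
    by_contra! h
    have : x ∈ interior (closure A) :=
      mem_interior.2 ⟨_, h, hbasis.isOpen ⟨x, α, hα, rfl⟩, hu.mem_ball_self hα.le x⟩
    rwa [hA] at this
  obtain ⟨_, ⟨c, β, hβ, rfl⟩, hac, hc⟩ :=
    hbasis.exists_subset_of_mem_open ha isClosed_closure.isOpen_compl
  refine ⟨a, hax, β, hβ, Set.eq_empty_of_forall_notMem fun z ⟨hz, hzA⟩ => ?_⟩
  exact hc (hu.ball_subset_of_mem hac hz) (subset_closure hzA)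

theorem unifNwd_of_isNowhereDense {κ : Cardinal.{v}} (hu : IsUltrametric κ.ord u)
    (hκ : κ.IsRegular)
    (hcover : ∀ α < κ.ord, ∃ (ι : Type w) (c : ι → X),
      Cardinal.lift.{v} #ι < Cardinal.lift.{w} κ ∧ ∀ x, ∃ i, c i ∈ Ball u α x)
    {A : Set X} (hA : @IsNowhereDense X (ballTopology κ.ord u) A) : UnifNwd κ.ord u A := by
  intro α hα
  obtain ⟨ι, c, hι, hc⟩ := hcover α hα
  choose a hac β hβ hβA using fun i => hu.exists_ball_disjoint_of_isNowhereDense hA hα (c i)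
  have hsup : ⨆ i, β i < κ.ord := by
    refine Ordinal.lift_iSup_lt_of_lt_cof ?_ hβ
    rwa [← Ordinal.lift_cof, hκ.cof_ord]
  have hsucc : succ α < κ.ord := (isSuccLimit_ord hκ.aleph0_le).succ_lt hα
  refine ⟨max (succ α) (⨆ i, β i), (lt_succ α).trans_le (le_max_left _ _), max_lt hsucc hsup,
    fun x => ?_⟩
  obtain ⟨i, hi⟩ := hc x
  refine ⟨a i, hu.mem_ball_trans hi (hac i), ?_⟩
  refine Set.eq_empty_of_subset_empty (hβA i ▸ Set.inter_subset_inter_left A ?_)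
  refine ball_subset_ball_of_le ((le_ciSup ⟨κ.ord, ?_⟩ i).trans (le_max_right _ _)) (a i)
  exact Set.forall_mem_range.2 fun i => (hβ i).le

end IsUltrametric

end Ultrametric

section Cantor

variable {κ : Cardinal.{0}}

theorem cantorUltra_le (a b : cantor κ) : cantorUltra κ a b ≤ κ.ord :=
  csSup_le' fun _ hα => hα.1.le

theorem eq_of_lt_cantorUltra {a b : cantor κ} {β : Set.Iio κ.ord}
    (h : (β : Ordinal) < cantorUltra κ a b) : a β = b β := by
  obtain ⟨α, hα, hβα⟩ := exists_lt_of_lt_csSup' h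
  exact hα.2 β hβα

theorem le_cantorUltra_iff (hκ : ℵ₀ ≤ κ) {γ : Ordinal} (hγ : γ ≤ κ.ord) {a b : cantor κ} :
    γ ≤ cantorUltra κ a b ↔ ∀ β : Set.Iio κ.ord, (β : Ordinal) < γ → a β = b β := by
  refine ⟨fun h β hβ => eq_of_lt_cantorUltra (hβ.trans_le h), fun h => ?_⟩
  refine le_of_forall_lt fun δ hδ =>
    lt_csSup_of_lt ⟨κ.ord, fun α hα => hα.1.le⟩ ⟨?_, ?_⟩ (lt_succ δ)
  · exact (isSuccLimit_ord hκ).succ_lt (hδ.trans_le hγ)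
  · exact fun β hβ => h β ((lt_succ_iff.1 hβ).trans_lt hδ)

theorem isUltrametric_cantorUltra (hκ : ℵ₀ ≤ κ) : IsUltrametric κ.ord (cantorUltra κ) where
  le_gamma := cantorUltra_le
  eq_gamma_iff a b := by
    rw [← (cantorUltra_le a b).ge_iff_eq, le_cantorUltra_iff hκ le_rfl]
    exact ⟨fun h => funext fun β => h β β.2, fun h β _ => congrFun h β⟩
  triangle x y z := by
    refine (le_cantorUltra_iff hκ ((min_le_left _ _).trans (cantorUltra_le y x))).2 fun β hβ => ?_
    exact (eq_of_lt_cantorUltra (hβ.trans_le (min_le_left _ _))).trans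
      (eq_of_lt_cantorUltra (hβ.trans_le (min_le_right _ _)))
  symm a b := by
    simp only [cantorUltra, eq_comm (a := a _)]

end Cantor

section Lex

variable {σ : Type*} [LinearOrder σ]

theorem toLex_not_lt_toLex_not_iff {x y : σ → Bool} :
    toLex (fun i => !x i) < toLex (fun i => !y i) ↔ toLex y < toLex x := by
  show (∃ i, (∀ j < i, (!x j) = !y j) ∧ (!x i) < !y i) ↔ ∃ i, (∀ j < i, y j = x j) ∧ y i < x i
  simp only [Bool.not_inj_iff, Bool.lt_iff, Bool.not_eq_false', Bool.not_eq_true']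
  exact exists_congr fun i => and_congr (forall₂_congr fun j _ => eq_comm) and_comm

theorem exists_strictMono_toLex_of_homogeneous [WellFoundedLT σ] {ι : Type*} [LinearOrder ι]
    {φ : ι → σ → Bool} (hφ : Injective φ) {i : Bool}
    (h : ∀ a b, a < b → (toLex (φ a) < toLex (φ b) ↔ i)) :
    ∃ ψ : ι → σ → Bool, StrictMono (toLex ∘ ψ) := by
  cases i
  · refine ⟨fun a j => !φ a j, fun a b hab => toLex_not_lt_toLex_not_iff.2 ?_⟩
    refine (not_lt.1 fun hlt => by simpa using (h a b hab).1 hlt).lt_of_ne ?_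
    exact fun hba => hab.ne' (hφ (toLex.injective hba))
  · exact ⟨φ, fun a b hab => (h a b hab).2 rfl⟩

variable {ι : Type*} [LinearOrder ι] [WellFoundedLT ι] {f : ι → σ → Bool}

theorem exists_splitting_index (hf : StrictMono (toLex ∘ f)) {x : ι} (hx : ∃ y, x < y) :
    ∃ d, f x d = false ∧ ∀ y, x < y → (∀ j < d, f y j = f x j) → f y d = true := by
  -- `n` is the successor of `x`, and `d` the first place where `f x` and `f n` differ.
  obtain ⟨n, hxn, hmin⟩ := wellFounded_lt.has_min {y | x < y} hx
  obtain ⟨d, hagree, hd⟩ := hf hxn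
  rw [Bool.lt_iff] at hd
  refine ⟨d, hd.1, fun y hxy hy => ?_⟩
  rcases (not_lt.1 (hmin y hxy)).eq_or_lt with rfl | hny
  · exact hd.2
  · by_contra hyd
    refine (hf hny).not_gt ⟨d, fun j hj => (hy j hj).trans (hagree j hj), ?_⟩
    exact Bool.lt_iff.2 ⟨by simpa using hyd, hd.2⟩

theorem exists_injective_option_sigma_of_strictMono (hf : StrictMono (toLex ∘ f)) :
    ∃ g : ι → Option (Σ d : σ, (Set.Iio d → Bool)), Injective g := by
  classical
  choose d hd using fun x (hx : ∃ y, x < y) => exists_splitting_index hf hx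
  have split_ne : ∀ x y hx hy, x < y → d x hx = d y hy → (∀ j < d x hx, f x j = f y j) → False := by
    intro x y hx hy hxy hdd hxy'
    have := (hd x hx).2 y hxy fun j hj => (hxy' j hj).symm
    rw [hdd, (hd y hy).1] at this
    exact Bool.false_ne_true this
  refine ⟨fun x => if hx : ∃ y, x < y then some ⟨d x hx, fun j => f x j⟩ else none, ?_⟩
  intro x y hxy
  by_contra hne
  wlog hlt : x < y generalizing x y
  · exact this hxy.symm (Ne.symm hne) ((Ne.symm hne).lt_of_le (not_lt.1 hlt))
  have hx : ∃ z, x < z := ⟨y, hlt⟩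
  by_cases hy : ∃ z, y < z
  · simp only [dif_pos hx, dif_pos hy, Option.some_inj, Sigma.mk.inj_iff] at hxy
    obtain ⟨hdd, hs⟩ := hxy
    refine split_ne x y hx hy hlt hdd fun j hj => ?_
    have hj' : HEq (⟨j, hj⟩ : Set.Iio (d x hx)) (⟨j, hdd ▸ hj⟩ : Set.Iio (d y hy)) :=
      (Subtype.heq_iff_coe_eq (by simp [hdd])).2 rfl
    exact (congr_heq hs hj' :)
  · simp [dif_pos hx, dif_neg hy] at hxy

end Lex

namespace WeaklyCompact

variable {κ : Cardinal.{0}}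

theorem isRegular (hκ : WeaklyCompact κ) : κ.IsRegular := by
  refine ⟨hκ.1.le, ?_⟩
  rw [← Cardinal.lift_le.{1}, Ordinal.lift_cof, ← Ordinal.cof_Iio]
  refine Order.le_cof_iff.2 fun s hs => ?_
  by_contra! hs_small
  have hlim := isSuccLimit_ord hκ.1.le
  have hgt : ∀ x : Set.Iio κ.ord, ∃ y ∈ s, x < y := fun x => by
    obtain ⟨y, hy, hxy⟩ := hs ⟨succ x, hlim.succ_lt x.2⟩
    exact ⟨y, hy, (lt_succ (x : Ordinal)).trans_le hxy⟩
  choose g hgs hg using hgt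
  obtain ⟨i, A, hA, hhom⟩ := hκ.2 fun x y => decide (g x = g y)
  have hhom' : ∀ x ∈ A, ∀ y ∈ A, x ≠ y → decide (g x = g y) = i := by
    intro x hx y hy hxy
    rcases hxy.lt_or_gt with h | h
    · exact hhom x hx y hy h
    · exact (decide_eq_decide.2 eq_comm).trans (hhom y hy x hx h)
  cases i
  · have hinj : Injective fun a : A => (⟨g a, hgs a⟩ : s) := fun a b hab => by
      by_contra hne
      exact of_decide_eq_false (hhom' a a.2 b b.2 (Subtype.coe_ne_coe.2 hne))
        (congrArg Subtype.val hab)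
    exact hs_small.not_ge (hA ▸ mk_le_of_injective hinj)
  · obtain ⟨x₀, hx₀⟩ : A.Nonempty := by
      rw [← Set.nonempty_coe_sort, ← Cardinal.mk_ne_zero_iff, hA, Ne, Cardinal.lift_eq_zero]
      exact (aleph0_pos.trans hκ.1).ne'
    have hsub : A ⊆ Set.Iio (g x₀) := fun x hx => by
      rcases eq_or_ne x x₀ with rfl | hne
      · exact hg x
      · exact (hg x).trans_eq (of_decide_eq_true (hhom' x hx x₀ hx₀ hne))
    have hsmall : #(Set.Iio (g x₀)) < Cardinal.lift.{1} κ := by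
      simpa using Cardinal.mk_Iio_lt (g x₀) (by simp)
    exact hsmall.not_ge (hA ▸ mk_le_mk_of_subset hsub)

theorem isStrongPrelimit (hκ : WeaklyCompact κ) : IsStrongPrelimit κ := by
  classical
  have hreg := hκ.isRegular
  intro x hx
  induction x using WellFoundedLT.induction with
  | _ x ih =>
  by_contra! hle
  have hcard : #x.ord.ToType = x := by simp
  obtain ⟨φ⟩ : Nonempty (Set.Iio κ.ord ↪ (x.ord.ToType → Bool)) := by
    rw [← Cardinal.lift_mk_le']
    simpa [hcard] using Cardinal.lift_le.{1}.2 hle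
  obtain ⟨i, A, hA, hhom⟩ := hκ.2 fun a b => decide (toLex (φ a) < toLex (φ b))
  obtain ⟨ψ, hψ⟩ := exists_strictMono_toLex_of_homogeneous (φ := fun a : A => φ a)
    (φ.injective.comp Subtype.val_injective) fun a b hab =>
      hhom a a.2 b b.2 hab ▸ decide_eq_true_iff.symm
  obtain ⟨g, hg⟩ := exists_injective_option_sigma_of_strictMono hψ
  have hsmall : #(Option (Σ d : x.ord.ToType, (Set.Iio d → Bool))) < κ := by
    rw [mk_option, mk_sigma]
    refine add_lt_of_lt hreg.aleph0_le (sum_lt_of_isRegular hreg (by rwa [hcard]) fun d => ?_)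
      (one_lt_aleph0.trans_le hreg.aleph0_le)
    have hd : #(Set.Iio d) < x := by simpa using Cardinal.mk_Iio_lt d (by simp)
    simpa using ih _ hd (hd.trans hx)
  have hle' := Cardinal.lift_mk_le'.2 ⟨⟨g, hg⟩⟩
  rw [hA, Cardinal.lift_uzero, Cardinal.lift_le] at hle'
  exact hsmall.not_ge hle'

end WeaklyCompact

theorem cantor_exists_cover_card_lt {κ : Cardinal.{0}} (hκ : ℵ₀ ≤ κ) (hκ' : IsStrongPrelimit κ)
    {α : Ordinal} (hα : α < κ.ord) :
    ∃ (ι : Type 1) (c : ι → cantor κ), Cardinal.lift.{0} #ι < Cardinal.lift.{1} κ ∧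
      ∀ x, ∃ i, c i ∈ Ball (cantorUltra κ) α x := by
  classical
  refine ⟨Set.Iio α → Bool, fun s β => if h : (β : Ordinal) < α then s ⟨β, h⟩ else false,
    ?_, fun x => ⟨fun β => x ⟨β, β.2.trans hα⟩, ?_⟩⟩
  · have h2α : Cardinal.lift.{1} (2 ^ α.card) < Cardinal.lift.{1} κ :=
      Cardinal.lift_lt.2 (hκ' (Cardinal.lt_ord.1 hα))
    simpa using h2α
  · refine (le_cantorUltra_iff hκ hα.le).2 fun β hβ => ?_
    simp [hβ]

theorem stmt15 (κ : Cardinal.{0}) (hκ : WeaklyCompact κ)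
    (A : Set (cantor κ)) (hA : IsNowhereDense A) :
    UnifNwd κ.ord (cantorUltra κ) A := by
  have hreg := hκ.isRegular
  exact (isUltrametric_cantorUltra hreg.aleph0_le).unifNwd_of_isNowhereDense hreg
    (fun _ hα => cantor_exists_cover_card_lt hreg.aleph0_le hκ.isStrongPrelimit hα) hA
end
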